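/- arXiv:2410.10822 — 9 statements merged into one kernel-verified Lean document; each statement's English description precedes it below -/
import Mathlib

section
/- Let R be a proper subring of a ring T. If there exists an element α ∈ T such that R[α] = T (the subring generated by R and α is all of T), then T has a maximal subring S with R ⊆ S and α ∉ S. -/
/-- If `R` is a proper subring of a ring `T` and `R[α] = T` for some `α ∈ T`,
then `T` has a maximal subring `S` with `R ⊆ S` and `α ∉ S`. -/
theorem stmt_0 {T : Type*} [Ring T] (R : Subring T) (hR : R ≠ ⊤) (α : T)
    (hα : Subring.closure ((R : Set T) ∪ {α}) = ⊤) :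
    ∃ S : Subring T, R ≤ S ∧ α ∉ S ∧ IsCoatom S := by
  have hαR : α ∉ R := by
    intro h
    apply hR
    have : Subring.closure ((R : Set T) ∪ {α}) ≤ R := by
      rw [Subring.closure_le]
      rintro x (hx | hx)
      · exact hx
      · exact hx ▸ h
    exact top_le_iff.mp (hα ▸ this)
  set s : Set (Subring T) := {S | R ≤ S ∧ α ∉ S} with hs
  have hRs : R ∈ s := ⟨le_refl R, hαR⟩
  obtain ⟨m, hRm, hm⟩ := zorn_le_nonempty₀ s
    (fun c hcs hc S₀ hS₀ => by
      haveI : Nonempty c := ⟨⟨S₀, hS₀⟩⟩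
      have hdir : Directed (· ≤ ·) (fun S : c => (S : Subring T)) := by
        intro a b
        rcases hc.total a.2 b.2 with h | h
        · exact ⟨b, h, le_refl _⟩
        · exact ⟨a, le_refl _, h⟩
      refine ⟨⨆ S : c, (S : Subring T), ⟨?_, ?_⟩, fun z hz => le_iSup (fun S : c => (S : Subring T)) ⟨z, hz⟩⟩
      · exact (hcs hS₀).1.trans (le_iSup (fun S : c => (S : Subring T)) ⟨S₀, hS₀⟩)
      · intro h
        rw [Subring.mem_iSup_of_directed hdir] at h
        obtain ⟨⟨S, hSc⟩, hαS⟩ := h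
        exact (hcs hSc).2 hαS) R hRs
  refine ⟨m, hm.1.1, hm.1.2, ?_, ?_⟩
  · intro h
    exact hm.1.2 (h ▸ Subring.mem_top α)
  · intro S' hS'
    by_contra hne
    have hαS' : α ∈ S' := by
      by_contra hα'
      exact hS'.not_ge (hm.2 ⟨hm.1.1.trans hS'.le, hα'⟩ hS'.le)
    apply hne
    have hle : Subring.closure ((R : Set T) ∪ {α}) ≤ S' := by
      rw [Subring.closure_le]
      rintro x (hx | hx)
      · exact hS'.le (hm.1.1 hx)
      · exact hx ▸ hαS'
    exact top_le_iff.mp (hα ▸ hle)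
end

section
/- If T is a quasi duo ring, then T is Dedekind finite: for all a, b ∈ T, ab = 1 implies ba = 1. -/
/-- A ring is left quasi duo if every maximal left ideal is a two-sided ideal. -/
def LeftQuasiDuo (T : Type*) [Ring T] : Prop :=
  ∀ M : Ideal T, M.IsMaximal → ∀ a ∈ M, ∀ r : T, a * r ∈ M

/-- A ring is right quasi duo if every maximal right ideal is a two-sided ideal,
i.e. the opposite ring is left quasi duo. -/
def RightQuasiDuo (T : Type*) [Ring T] : Prop :=
  LeftQuasiDuo Tᵐᵒᵖ

/-- A quasi duo ring is Dedekind finite. -/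
theorem stmt_2 {T : Type*} [Ring T] (h1 : LeftQuasiDuo T) (h2 : RightQuasiDuo T) :
    ∀ a b : T, a * b = 1 → b * a = 1 := by
  intro a b hab
  by_contra hba
  -- The left ideal Ta is proper: if t * a = 1 then t = b, so b * a = 1.
  have hproper : Ideal.span {a} ≠ ⊤ := by
    intro htop
    have h1mem : (1 : T) ∈ Ideal.span {a} := htop ▸ Submodule.mem_top
    obtain ⟨t, ht⟩ := Submodule.mem_span_singleton.mp h1mem
    have ht' : t * a = 1 := ht
    have : t = b := by
      calc t = t * (a * b) := by rw [hab, mul_one]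
        _ = (t * a) * b := by rw [mul_assoc]
        _ = b := by rw [ht', one_mul]
    exact hba (this ▸ ht')
  obtain ⟨M, hM, hle⟩ := Ideal.exists_le_maximal _ hproper
  have haM : a ∈ M := hle (Ideal.subset_span rfl)
  have : (1 : T) ∈ M := hab ▸ h1 M hM a haM b
  exact hM.ne_top ((Ideal.eq_top_iff_one M).mpr this)
end

section
/- Let T be a ring which is integral over its center C. Suppose A is a maximal subring of C and there exists α ∈ U(C) with α ∈ A and α⁻¹ ∉ A, and suppose the integral closure B of A in T is a subring of T. Then B[α⁻¹] = T, and consequently T has a maximal subring R with B ⊆ R, α⁻¹ ∉ R, and R ∩ C = A. -/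
open Polynomial

/-- Let `T` be a ring integral over its center `C`, `A` a maximal subring of `C`
containing a unit `α` of `C` with `α⁻¹ ∉ A`, and suppose the integral closure
`B` of `A` in `T` is a subring of `T`.  Then `B[α⁻¹] = T`, and `T` has a maximal
subring `R ⊇ B` with `α⁻¹ ∉ R` and `R ∩ C = A`. -/
theorem stmt_6 {T : Type*} [Ring T]
    (hint : ∀ t : T, ∃ p : Polynomial (Subring.center T),
      p.Monic ∧ p.eval₂ (Subring.center T).subtype t = 0)
    (A : Subring (Subring.center T)) (hA : IsCoatom A)
    (α : (Subring.center T)ˣ) (hαA : (α : Subring.center T) ∈ A)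
    (hαinv : ((α⁻¹ : (Subring.center T)ˣ) : Subring.center T) ∉ A)
    (B : Subring T)
    (hB : (B : Set T) = {t : T | ∃ p : Polynomial A,
      p.Monic ∧ p.eval₂ ((Subring.center T).subtype.comp A.subtype) t = 0}) :
    Subring.closure ((B : Set T) ∪
        {(((α⁻¹ : (Subring.center T)ˣ) : Subring.center T) : T)}) = ⊤ ∧
      ∃ R : Subring T, IsCoatom R ∧ B ≤ R ∧
        (((α⁻¹ : (Subring.center T)ˣ) : Subring.center T) : T) ∉ R ∧
        (∀ c : Subring.center T, (c : T) ∈ R ↔ c ∈ A) := by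
  classical
  -- multiplying by a higher power of α preserves membership in A
  have hαmono : ∀ (c : (Subring.center T)) (k l : ℕ), k ≤ l → c * (α : (Subring.center T)) ^ k ∈ A → c * (α : (Subring.center T)) ^ l ∈ A := by
    intro c k l hkl hk
    have h1 : c * (α : (Subring.center T)) ^ l = c * (α : (Subring.center T)) ^ k * (α : (Subring.center T)) ^ (l - k) := by
      rw [mul_assoc, ← pow_add, Nat.add_sub_cancel' hkl]
    rw [h1]
    exact A.mul_mem hk (A.pow_mem hαA _)
  -- every element of (Subring.center T) has the form a·α⁻ᵏ
  have key : ∀ c : (Subring.center T), ∃ k : ℕ, c * (α : (Subring.center T)) ^ k ∈ A := by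
    let S : Subring (Subring.center T) :=
      { carrier := {c : (Subring.center T) | ∃ k : ℕ, c * (α : (Subring.center T)) ^ k ∈ A}
        zero_mem' := ⟨0, by simpa using A.zero_mem⟩
        one_mem' := ⟨0, by simpa using A.one_mem⟩
        add_mem' := by
          rintro a b ⟨k, hk⟩ ⟨l, hl⟩
          refine ⟨k + l, ?_⟩
          have h1 : (a + b) * (α : (Subring.center T)) ^ (k + l)
              = a * (α : (Subring.center T)) ^ (k + l) + b * (α : (Subring.center T)) ^ (k + l) := by ring
          rw [h1]
          exact A.add_mem (hαmono a k _ (Nat.le_add_right _ _) hk)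
            (hαmono b l _ (Nat.le_add_left _ _) hl)
        neg_mem' := by
          rintro a ⟨k, hk⟩
          exact ⟨k, by rw [neg_mul]; exact A.neg_mem hk⟩
        mul_mem' := by
          rintro a b ⟨k, hk⟩ ⟨l, hl⟩
          refine ⟨k + l, ?_⟩
          have h1 : a * b * (α : (Subring.center T)) ^ (k + l) = (a * (α : (Subring.center T)) ^ k) * (b * (α : (Subring.center T)) ^ l) := by
            rw [pow_add]; ring
          rw [h1]; exact A.mul_mem hk hl }
    have hαS : ((α⁻¹ : (Subring.center T)ˣ) : (Subring.center T)) ∈ S := ⟨1, by rw [pow_one, Units.inv_mul]; exact A.one_mem⟩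
    have hAS : A < S := by
      refine lt_of_le_of_ne (fun x hx => ⟨0, by simpa using hx⟩) ?_
      intro h
      exact hαinv (h ▸ hαS)
    have hStop : S = ⊤ := hA.2 S hAS
    intro c
    have : c ∈ S := hStop ▸ Subring.mem_top c
    exact this
  -- for every t ∈ T, some α^k·t is integral over A
  have keyB : ∀ t : T, ∃ k : ℕ, (((α : (Subring.center T)) ^ k : (Subring.center T)) : T) * t ∈ B := by
    intro t
    obtain ⟨p, hpm, hp0⟩ := hint t
    obtain ⟨k, hk⟩ : ∃ k : ℕ, ∀ i : ℕ, p.coeff i * (α : (Subring.center T)) ^ k ∈ A := by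
      refine ⟨(Finset.range (p.natDegree + 1)).sup fun i => (key (p.coeff i)).choose,
        fun i => ?_⟩
      rcases le_or_gt i p.natDegree with hi | hi
      · exact hαmono _ _ _
          (Finset.le_sup (f := fun i => (key (p.coeff i)).choose)
            (Finset.mem_range.2 (Nat.lt_succ_of_le hi)))
          (key (p.coeff i)).choose_spec
      · rw [p.coeff_eq_zero_of_natDegree_lt hi, zero_mul]; exact A.zero_mem
    set q : Polynomial (Subring.center T) := p.scaleRoots ((α : (Subring.center T)) ^ k) with hq
    have hqc : ∀ i, q.coeff i ∈ A := by
      intro i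
      rw [hq, coeff_scaleRoots]
      rcases lt_trichotomy i p.natDegree with hi | hi | hi
      · rw [← pow_mul]
        exact hαmono _ k _ (Nat.le_mul_of_pos_right k (by omega)) (hk i)
      · rw [hi, Nat.sub_self, pow_zero, mul_one, hpm.coeff_natDegree]
        exact A.one_mem
      · rw [p.coeff_eq_zero_of_natDegree_lt hi, zero_mul]
        exact A.zero_mem
    have hsub : (↑q.coeffs : Set (Subring.center T)) ⊆ (A : Set (Subring.center T)) := by
      intro x hx
      obtain ⟨i, -, rfl⟩ := Polynomial.mem_coeffs_iff.1 hx
      exact hqc i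
    refine ⟨k, ?_⟩
    rw [← SetLike.mem_coe, hB]
    refine ⟨q.toSubring A hsub, (monic_toSubring _ _ _).2 ((monic_scaleRoots_iff _).2 hpm), ?_⟩
    have h1 : (q.toSubring A hsub).map A.subtype = q := map_toSubring _ _ _
    have h2 : (q.toSubring A hsub).eval₂ ((Subring.center T).subtype.comp A.subtype)
          ((((α : (Subring.center T)) ^ k : (Subring.center T)) : T) * t)
        = q.eval₂ (Subring.center T).subtype ((((α : (Subring.center T)) ^ k : (Subring.center T)) : T) * t) := by
      conv_rhs => rw [← h1]
      rw [eval₂_map]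
    rw [h2, hq]
    have h3 := scaleRoots_eval₂_mul_of_commute (p := p) (Subring.center T).subtype t ((α : (Subring.center T)) ^ k)
      (Subring.mem_center_iff.mp ((α : (Subring.center T)) ^ k).2 t).symm
      (fun s₁ s₂ => Subring.mem_center_iff.mp s₂.2 ((Subring.center T).subtype s₁))
    have h4 : (Subring.center T).subtype ((α : (Subring.center T)) ^ k) = (((α : (Subring.center T)) ^ k : (Subring.center T)) : T) := rfl
    rw [h4] at h3
    rw [h3, hp0, mul_zero]
  -- the image of A is contained in B
  have haB : ∀ a : A, (((a : (Subring.center T))) : T) ∈ B := by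
    intro a
    rw [← SetLike.mem_coe, hB]
    refine ⟨X - Polynomial.C a, monic_X_sub_C a, ?_⟩
    rw [eval₂_sub, eval₂_X, eval₂_C]
    exact sub_eq_zero_of_eq rfl
  -- α⁻¹ is not in B
  have hαinvB : ((((α⁻¹ : (Subring.center T)ˣ) : (Subring.center T))) : T) ∉ B := by
    intro hmem
    rw [← SetLike.mem_coe, hB] at hmem
    obtain ⟨q, hqm, hq0⟩ := hmem
    have hι : Function.Injective (Subring.center T).subtype := Subtype.coe_injective
    have h0 : q.eval₂ A.subtype ((α⁻¹ : (Subring.center T)ˣ) : (Subring.center T)) = 0 := by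
      apply hι
      rw [hom_eval₂, map_zero]
      exact hq0
    rw [eval₂_eq_sum_range] at h0
    simp only [Subring.coe_subtype] at h0
    set m := q.natDegree with hm
    have hcancel : ∀ i : ℕ, i ≤ m →
        (α : (Subring.center T)) ^ m * ((α⁻¹ : (Subring.center T)ˣ) : (Subring.center T)) ^ i = (α : (Subring.center T)) ^ (m - i) := by
      intro i hi
      have h1 : (α : (Subring.center T)) ^ m = (α : (Subring.center T)) ^ (m - i) * (α : (Subring.center T)) ^ i := by
        rw [← pow_add, Nat.sub_add_cancel hi]
      rw [h1, mul_assoc]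
      have h2 : (α : (Subring.center T)) ^ i * ((α⁻¹ : (Subring.center T)ˣ) : (Subring.center T)) ^ i = 1 := by
        rw [← Units.val_pow_eq_pow_val, ← Units.val_pow_eq_pow_val, ← Units.val_mul,
          ← mul_pow, mul_inv_cancel, one_pow, Units.val_one]
      rw [h2, mul_one]
    have h1 : (∑ i ∈ Finset.range (m + 1), (q.coeff i : (Subring.center T)) * (α : (Subring.center T)) ^ (m - i)) = 0 := by
      calc ∑ i ∈ Finset.range (m + 1), (q.coeff i : (Subring.center T)) * (α : (Subring.center T)) ^ (m - i)
          = (α : (Subring.center T)) ^ m * ∑ i ∈ Finset.range (m + 1),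
              (q.coeff i : (Subring.center T)) * ((α⁻¹ : (Subring.center T)ˣ) : (Subring.center T)) ^ i := by
            rw [Finset.mul_sum]
            refine Finset.sum_congr rfl fun i hi => ?_
            rw [← hcancel i (Nat.lt_succ_iff.mp (Finset.mem_range.mp hi))]
            ring
        _ = 0 := by rw [h0, mul_zero]
    rw [Finset.sum_range_succ] at h1
    have hmn : (q.coeff m : (Subring.center T)) * (α : (Subring.center T)) ^ (m - m) = 1 := by
      rw [Nat.sub_self, pow_zero, mul_one, hm, hqm.coeff_natDegree, OneMemClass.coe_one]
    rw [hmn] at h1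
    have h2 : (α : (Subring.center T)) * (-∑ i ∈ Finset.range m, (q.coeff i : (Subring.center T)) * (α : (Subring.center T)) ^ (m - 1 - i)) = 1 := by
      have hstep : ∀ i ∈ Finset.range m,
          (α : (Subring.center T)) * ((q.coeff i : (Subring.center T)) * (α : (Subring.center T)) ^ (m - 1 - i))
            = (q.coeff i : (Subring.center T)) * (α : (Subring.center T)) ^ (m - i) := by
        intro i hi
        have hlt : i < m := Finset.mem_range.mp hi
        have he : (m - i) = (m - 1 - i) + 1 := by omega
        rw [he, pow_succ]
        ring
      rw [mul_neg, Finset.mul_sum, Finset.sum_congr rfl hstep]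
      have : ∑ i ∈ Finset.range m, (q.coeff i : (Subring.center T)) * (α : (Subring.center T)) ^ (m - i) = -1 :=
        eq_neg_of_add_eq_zero_left h1
      rw [this, neg_neg]
    have h3 : ((α⁻¹ : (Subring.center T)ˣ) : (Subring.center T))
        = -∑ i ∈ Finset.range m, (q.coeff i : (Subring.center T)) * (α : (Subring.center T)) ^ (m - 1 - i) := by
      have h4 : ((α⁻¹ : (Subring.center T)ˣ) : (Subring.center T)) = ((α⁻¹ : (Subring.center T)ˣ) : (Subring.center T)) * ((α : (Subring.center T)) *
          (-∑ i ∈ Finset.range m, (q.coeff i : (Subring.center T)) * (α : (Subring.center T)) ^ (m - 1 - i))) := by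
        rw [h2, mul_one]
      rwa [← mul_assoc, Units.inv_mul, one_mul] at h4
    apply hαinv
    rw [h3]
    exact A.neg_mem (Subring.sum_mem A fun i _ =>
      A.mul_mem (SetLike.coe_mem (q.coeff i)) (A.pow_mem hαA _))
  -- Part 1 : B[α⁻¹] = T
  have hclosure : Subring.closure ((B : Set T) ∪ {((((α⁻¹ : (Subring.center T)ˣ) : (Subring.center T))) : T)}) = ⊤ := by
    rw [eq_top_iff]
    intro t _
    obtain ⟨k, hk⟩ := keyB t
    have hBle : (B : Set T) ⊆
        (Subring.closure ((B : Set T) ∪ {((((α⁻¹ : (Subring.center T)ˣ) : (Subring.center T))) : T)}) : Set T) :=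
      subset_trans Set.subset_union_left Subring.subset_closure
    have hα' : ((((α⁻¹ : (Subring.center T)ˣ) : (Subring.center T))) : T) ∈
        Subring.closure ((B : Set T) ∪ {((((α⁻¹ : (Subring.center T)ˣ) : (Subring.center T))) : T)}) :=
      Subring.subset_closure (Set.mem_union_right _ rfl)
    have h1 : (((α : (Subring.center T)) ^ k : (Subring.center T)) : T) * t ∈
        Subring.closure ((B : Set T) ∪ {((((α⁻¹ : (Subring.center T)ˣ) : (Subring.center T))) : T)}) := hBle hk
    have h2 := mul_mem (pow_mem hα' k) h1
    have hcalc : ((((α⁻¹ : (Subring.center T)ˣ) : (Subring.center T))) : T) ^ k * ((((α : (Subring.center T)) ^ k : (Subring.center T)) : T) * t) = t := by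
      rw [← mul_assoc]
      have hCunit : (((α⁻¹ : (Subring.center T)ˣ) : (Subring.center T))) ^ k * ((α : (Subring.center T)) ^ k) = (1 : (Subring.center T)) := by
        rw [← Units.val_pow_eq_pow_val, ← Units.val_pow_eq_pow_val, ← Units.val_mul,
          ← mul_pow, inv_mul_cancel, one_pow, Units.val_one]
      have := congrArg (fun x : (Subring.center T) => (x : T)) hCunit
      simp only [MulMemClass.coe_mul, SubmonoidClass.coe_pow, OneMemClass.coe_one] at this
      simp only [SubmonoidClass.coe_pow]
      rw [this, one_mul]
    rwa [hcalc] at h2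
  refine ⟨hclosure, ?_⟩
  -- Part 2 : Zorn's lemma
  obtain ⟨R, hBR, hRP, hRmax⟩ := zorn_le_nonempty₀
    {S : Subring T | B ≤ S ∧ ((((α⁻¹ : (Subring.center T)ˣ) : (Subring.center T))) : T) ∉ S}
    (fun c hcP hc S hS => by
      refine ⟨sSup c, ⟨le_trans (hcP hS).1 (le_sSup hS), ?_⟩, fun z hz => le_sSup hz⟩
      intro hmem
      rw [Subring.mem_sSup_of_directedOn ⟨S, hS⟩ hc.directedOn] at hmem
      obtain ⟨S', hS', hmem⟩ := hmem
      exact (hcP hS').2 hmem)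
    B ⟨le_refl B, hαinvB⟩
  obtain ⟨hBR', hαR⟩ := hRP
  have hcoatom : IsCoatom R := by
    constructor
    · intro h
      exact hαR (h ▸ Subring.mem_top _)
    · intro S (hRS : R < S)
      have hαS : ((((α⁻¹ : (Subring.center T)ˣ) : (Subring.center T))) : T) ∈ S := by
        by_contra hαS
        exact hRS.not_ge (hRmax ⟨le_trans hBR' hRS.le, hαS⟩ hRS.le)
      rw [eq_top_iff, ← hclosure, Subring.closure_le]
      exact Set.union_subset (fun x hx => hRS.le (hBR' hx))
        (Set.singleton_subset_iff.mpr hαS)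
  refine ⟨R, hcoatom, hBR', hαR, fun c => ⟨?_, fun hc => hBR' (haB ⟨c, hc⟩)⟩⟩
  intro hc
  by_contra hcA
  have hlt : A < Subring.comap (Subring.center T).subtype R := by
    refine lt_of_le_of_ne (fun x hx => ?_) ?_
    · exact hBR' (haB ⟨x, hx⟩)
    · intro h
      exact hcA (h ▸ hc)
  have htop := hA.2 _ hlt
  exact hαR (htop ▸ Subring.mem_top ((α⁻¹ : (Subring.center T)ˣ) : (Subring.center T)) : ((α⁻¹ : (Subring.center T)ˣ) : (Subring.center T)) ∈ Subring.comap (Subring.center T).subtype R)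
end

section
/- Let R ⊆ T be a ring extension and V a maximal subring of T. Suppose u ∈ U(R) with u ∈ V, u⁻¹ ∉ V, and uV = Vu. Then R ∩ V is a proper subring of R and (R ∩ V)[u⁻¹] = R; hence R has a maximal subring. -/
/-- Let `R ⊆ T` be a ring extension, `V` a maximal subring of `T`, and
`u ∈ U(R)` (with inverse `w`) such that `u ∈ V`, `u⁻¹ ∉ V` and `uV = Vu`.
Then `R ∩ V` is a proper subring of `R`, `(R ∩ V)[u⁻¹] = R`, and hence
`R` has a maximal subring. -/
theorem stmt_7 {T : Type*} [Ring T] (R V : Subring T) (hV : IsCoatom V)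
    (u w : T) (huR : u ∈ R) (hwR : w ∈ R) (huw : u * w = 1) (hwu : w * u = 1)
    (huV : u ∈ V) (hwV : w ∉ V)
    (hcomm : ∀ t : T, (∃ v ∈ V, t = u * v) ↔ (∃ v ∈ V, t = v * u)) :
    R ⊓ V < R ∧
      Subring.closure (((R ⊓ V : Subring T) : Set T) ∪ {w}) = R ∧
      ∃ S : Subring ↥R, IsCoatom S := by
  -- w moves past elements of V
  have hwmul : ∀ v ∈ V, ∃ v' ∈ V, w * v = v' * w := by
    intro v hv
    obtain ⟨v', hv', h⟩ := (hcomm (v * u)).2 ⟨v, hv, rfl⟩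
    refine ⟨v', hv', ?_⟩
    calc w * v = w * (v * u) * w := by rw [mul_assoc w (v*u) w, mul_assoc v u w, huw, mul_one]
      _ = w * (u * v') * w := by rw [← h]
      _ = v' * w := by rw [← mul_assoc w u v', hwu, one_mul]
  have hwpow : ∀ (m : ℕ) (v : T), v ∈ V → ∃ v' ∈ V, w ^ m * v = v' * w ^ m := by
    intro m
    induction m with
    | zero => intro v hv; exact ⟨v, hv, by simp⟩
    | succ m ih =>
      intro v hv
      obtain ⟨v1, hv1, h1⟩ := hwmul v hv
      obtain ⟨v2, hv2, h2⟩ := ih v1 hv1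
      refine ⟨v2, hv2, ?_⟩
      rw [pow_succ, mul_assoc, h1, ← mul_assoc, h2, mul_assoc]
  have hwuk : ∀ n : ℕ, w ^ n * u ^ n = 1 := by
    intro n
    induction n with
    | zero => simp
    | succ n ih => rw [pow_succ, pow_succ', mul_assoc, ← mul_assoc w u, hwu, one_mul, ih]
  have huwk : ∀ n : ℕ, u ^ n * w ^ n = 1 := by
    intro n
    induction n with
    | zero => simp
    | succ n ih => rw [pow_succ, pow_succ', mul_assoc, ← mul_assoc u w, huw, one_mul, ih]
  have hukwn : ∀ m n : ℕ, m ≤ n → u ^ (n - m) * w ^ n = w ^ m := by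
    intro m n h
    have hn : w ^ n = w ^ (n - m) * w ^ m := by rw [← pow_add, Nat.sub_add_cancel h]
    rw [hn, ← mul_assoc, huwk, one_mul]
  -- every element of T is v * w^n
  have key : ∀ t : T, ∃ n : ℕ, ∃ v ∈ V, t = v * w ^ n := by
    obtain ⟨S, hSmem⟩ : ∃ S : Subring T, ∀ t, (t ∈ S ↔ ∃ n : ℕ, ∃ v ∈ V, t = v * w ^ n) :=
      ⟨{ carrier := {t | ∃ n : ℕ, ∃ v ∈ V, t = v * w ^ n}
         one_mem' := ⟨0, 1, V.one_mem, by simp⟩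
         zero_mem' := ⟨0, 0, V.zero_mem, by simp⟩
         add_mem' := by
           rintro a b ⟨m, v1, hv1, rfl⟩ ⟨n, v2, hv2, rfl⟩
           rcases le_total m n with h | h
           · refine ⟨n, v1 * u ^ (n - m) + v2, V.add_mem (V.mul_mem hv1 (V.pow_mem huV _)) hv2, ?_⟩
             rw [add_mul, mul_assoc, hukwn m n h]
           · refine ⟨m, v1 + v2 * u ^ (m - n), V.add_mem hv1 (V.mul_mem hv2 (V.pow_mem huV _)), ?_⟩
             rw [add_mul, mul_assoc, hukwn n m h]
         mul_mem' := by
           rintro a b ⟨m, v1, hv1, rfl⟩ ⟨n, v2, hv2, rfl⟩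
           obtain ⟨v2', hv2', h2⟩ := hwpow m v2 hv2
           refine ⟨m + n, v1 * v2', V.mul_mem hv1 hv2', ?_⟩
           rw [mul_assoc v1 (w^m), ← mul_assoc (w^m) v2, h2, mul_assoc v2', ← pow_add,
             ← mul_assoc]
         neg_mem' := by
           rintro a ⟨n, v, hv, rfl⟩
           exact ⟨n, -v, V.neg_mem hv, by rw [neg_mul]⟩ }, fun t => Iff.rfl⟩
    have hVS : V ≤ S := fun v hv => (hSmem v).2 ⟨0, v, hv, by simp⟩
    have hwS : w ∈ S := (hSmem w).2 ⟨1, 1, V.one_mem, by simp⟩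
    have hST : S = ⊤ := hV.2 S (lt_of_le_of_ne hVS (by rintro rfl; exact hwV hwS))
    intro t
    have ht : t ∈ S := hST ▸ Subring.mem_top t
    exact (hSmem t).1 ht
  -- every element of R is v * w^n with v ∈ R ⊓ V
  have keyR : ∀ r ∈ R, ∃ n : ℕ, ∃ v ∈ R ⊓ V, r = v * w ^ n := by
    intro r hr
    obtain ⟨n, v, hv, rfl⟩ := key r
    have hvR : v ∈ R := by
      have hve : v = (v * w ^ n) * u ^ n := by rw [mul_assoc, hwuk, mul_one]
      rw [hve]
      exact R.mul_mem hr (R.pow_mem huR n)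
    exact ⟨n, v, ⟨hvR, hv⟩, rfl⟩
  have h1 : R ⊓ V < R := by
    refine lt_of_le_of_ne inf_le_left fun h => hwV ?_
    have : w ∈ R ⊓ V := by rw [h]; exact hwR
    exact this.2
  have h2 : Subring.closure (((R ⊓ V : Subring T) : Set T) ∪ {w}) = R := by
    apply le_antisymm
    · rw [Subring.closure_le]
      rintro t (ht | ht)
      · exact (inf_le_left : R ⊓ V ≤ R) ht
      · rw [Set.mem_singleton_iff] at ht; rw [ht]; exact hwR
    · intro r hr
      obtain ⟨n, v, hv, rfl⟩ := keyR r hr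
      have hvmem : v ∈ Subring.closure (((R ⊓ V : Subring T) : Set T) ∪ {w}) :=
        Subring.subset_closure (Or.inl hv)
      have hwmem : w ∈ Subring.closure (((R ⊓ V : Subring T) : Set T) ∪ {w}) :=
        Subring.subset_closure (Or.inr rfl)
      exact mul_mem hvmem (pow_mem hwmem n)
  refine ⟨h1, h2, ?_⟩
  -- Zorn argument inside R
  set w' : ↥R := ⟨w, hwR⟩ with hw'
  set A : Subring ↥R := (R ⊓ V).comap R.subtype with hA
  have hw'A : w' ∉ A := fun h => hwV h.2
  have hfull : ∀ S : Subring ↥R, A ≤ S → w' ∈ S → S = ⊤ := by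
    intro S hAS hwS
    rw [eq_top_iff]
    rintro ⟨x, hx⟩ -
    have hmap : Subring.closure (((R ⊓ V : Subring T) : Set T) ∪ {w}) ≤ S.map R.subtype := by
      rw [Subring.closure_le]
      rintro t (ht | ht)
      · exact ⟨⟨t, ht.1⟩, hAS ht, rfl⟩
      · rw [Set.mem_singleton_iff] at ht
        exact ⟨w', hwS, ht.symm⟩
    rw [h2] at hmap
    obtain ⟨y, hy, hyx⟩ := hmap hx
    have : y = ⟨x, hx⟩ := Subtype.ext hyx
    rwa [this] at hy
  obtain ⟨M, hAM, hMmax⟩ := zorn_le_nonempty₀ {S : Subring ↥R | A ≤ S ∧ w' ∉ S}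
    (fun c hcs hc y hy => by
      refine ⟨sSup c, ⟨?_, ?_⟩, fun z hz => le_sSup hz⟩
      · exact le_trans (hcs hy).1 (le_sSup hy)
      · intro hw
        rw [Subring.mem_sSup_of_directedOn ⟨y, hy⟩ hc.directedOn] at hw
        obtain ⟨s, hs, hws⟩ := hw
        exact (hcs hs).2 hws)
    A ⟨le_refl A, hw'A⟩
  have hMmem := hMmax.1
  refine ⟨M, ?_, ?_⟩
  · intro hMtop
    exact hMmem.2 (hMtop ▸ Subring.mem_top w')
  · intro b hb
    by_cases hwb : w' ∈ b
    · exact hfull b (le_trans hAM hb.le) hwb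
    · exact absurd ((hMmax.2 ⟨le_trans hMmem.1 hb.le, hwb⟩ hb.le).antisymm hb.le) hb.ne'
end

section
/- Let V be a maximal subring of a ring T such that V is left integrally closed in T, and let x ∈ T \ V satisfy x ∈ U(T) and xV = Vx. Then x⁻¹ ∈ V. -/
open Finset in
/-- Let `V` be a maximal subring of a ring `T` which is left integrally closed
in `T`, and let `x ∈ T \ V` be a unit of `T` (with inverse `y`) such that
`xV = Vx`.  Then `x⁻¹ ∈ V`. -/
theorem stmt_8 {T : Type*} [Ring T] (V : Subring T) (hV : IsCoatom V)
    (hic : ∀ t : T, ∀ n : ℕ, 1 ≤ n → ∀ v : ℕ → T, (∀ i, v i ∈ V) →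
      t ^ n + ∑ i ∈ Finset.range n, v i * t ^ i = 0 → t ∈ V)
    (x y : T) (hxV : x ∉ V) (hxy : x * y = 1) (hyx : y * x = 1)
    (hcomm : ∀ t : T, (∃ v ∈ V, t = x * v) ↔ (∃ v ∈ V, t = v * x)) :
    y ∈ V := by
  -- move lemma: x * v = w * x
  have hmove : ∀ v ∈ V, ∃ w ∈ V, x * v = w * x := fun v hv =>
    (hcomm (x * v)).mp ⟨v, hv, rfl⟩
  have hmovepow : ∀ (i : ℕ), ∀ v ∈ V, ∃ w ∈ V, x ^ i * v = w * x ^ i := by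
    intro i
    induction i with
    | zero => intro v hv; exact ⟨v, hv, by simp⟩
    | succ i ih =>
      intro v hv
      obtain ⟨w, hw, hxw⟩ := hmove v hv
      obtain ⟨u, hu, hxu⟩ := ih w hw
      refine ⟨u, hu, ?_⟩
      rw [pow_succ, mul_assoc, hxw, ← mul_assoc, hxu, mul_assoc]
  -- the predicate
  let P : T → Prop := fun t => ∃ n, ∃ v : ℕ → T, (∀ i, v i ∈ V) ∧
    t = ∑ i ∈ Finset.range n, v i * x ^ i
  have hpad : ∀ t n m, n ≤ m →
      (∃ v : ℕ → T, (∀ i, v i ∈ V) ∧ t = ∑ i ∈ Finset.range n, v i * x ^ i) →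
      ∃ v : ℕ → T, (∀ i, v i ∈ V) ∧ t = ∑ i ∈ Finset.range m, v i * x ^ i := by
    rintro t n m hnm ⟨v, hv, rfl⟩
    refine ⟨fun i => if i < n then v i else 0, fun i => ?_, ?_⟩
    · dsimp only; split
      · exact hv _
      · exact V.zero_mem
    · rw [← Finset.sum_subset (Finset.range_subset_range.mpr hnm)
        (fun i _ hi => by
          have h' : ¬ i < n := fun h => hi (Finset.mem_range.mpr h)
          simp [h'])]
      refine Finset.sum_congr rfl fun i hi => ?_
      simp [Finset.mem_range.mp hi]
  have hPV : ∀ v ∈ V, P v := by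
    intro v hv
    exact ⟨1, fun _ => v, fun _ => hv, by simp⟩
  have hP0 : P 0 := hPV 0 V.zero_mem
  have hP1 : P 1 := hPV 1 V.one_mem
  have hPx : P x := by
    refine ⟨2, fun i => if i = 1 then 1 else 0, fun i => ?_, ?_⟩
    · dsimp only; split
      · exact V.one_mem
      · exact V.zero_mem
    · simp [Finset.sum_range_succ]
  have hPadd : ∀ s t, P s → P t → P (s + t) := by
    rintro s t ⟨n, hs⟩ ⟨m, ht⟩
    obtain ⟨v, hv, rfl⟩ := hpad s n (max n m) (le_max_left _ _) hs
    obtain ⟨w, hw, rfl⟩ := hpad t m (max n m) (le_max_right _ _) ht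
    refine ⟨max n m, fun i => v i + w i, fun i => V.add_mem (hv i) (hw i), ?_⟩
    rw [← Finset.sum_add_distrib]
    exact Finset.sum_congr rfl (fun i _ => by rw [add_mul])
  have hPneg : ∀ t, P t → P (-t) := by
    rintro t ⟨n, v, hv, rfl⟩
    refine ⟨n, fun i => -v i, fun i => V.neg_mem (hv i), ?_⟩
    rw [← Finset.sum_neg_distrib]
    exact Finset.sum_congr rfl (fun i _ => by rw [neg_mul])
  have hPmulV : ∀ t, P t → ∀ w ∈ V, P (t * w) := by
    rintro t ⟨n, v, hv, rfl⟩ w hw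
    choose u hu hxu using fun i => hmovepow i w hw
    refine ⟨n, fun i => v i * u i, fun i => V.mul_mem (hv i) (hu i), ?_⟩
    rw [Finset.sum_mul]
    exact Finset.sum_congr rfl (fun i _ => by
      rw [mul_assoc, hxu i, ← mul_assoc])
  have hPmulx : ∀ t, P t → P (t * x) := by
    rintro t ⟨n, v, hv, rfl⟩
    refine ⟨n + 1, fun i => if i = 0 then 0 else v (i - 1),
      fun i => ?_, ?_⟩
    · dsimp only; split
      · exact V.zero_mem
      · exact hv _
    · rw [Finset.sum_range_succ', Finset.sum_mul]
      simp only [Nat.succ_ne_zero, if_false, Nat.add_sub_cancel, if_pos rfl,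
        zero_mul, add_zero, reduceIte]
      exact Finset.sum_congr rfl (fun i _ => by rw [mul_assoc, ← pow_succ])
  have hPmulxpow : ∀ t, P t → ∀ i : ℕ, P (t * x ^ i) := by
    intro t ht i
    induction i with
    | zero => simpa using ht
    | succ i ih => rw [pow_succ, ← mul_assoc]; exact hPmulx _ ih
  have hPmul : ∀ s t, P s → P t → P (s * t) := by
    rintro s t hs ⟨n, v, hv, rfl⟩
    rw [Finset.mul_sum]
    induction n with
    | zero => simpa using hP0
    | succ n ih =>
      rw [Finset.sum_range_succ]
      exact hPadd _ _ ih (by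
        rw [← mul_assoc]
        exact hPmulxpow _ (hPmulV _ hs _ (hv n)) n)
  -- the subring
  let S : Subring T :=
    { carrier := setOf P
      zero_mem' := hP0
      one_mem' := hP1
      add_mem' := fun ha hb => hPadd _ _ ha hb
      mul_mem' := fun ha hb => hPmul _ _ ha hb
      neg_mem' := fun ha => hPneg _ ha }
  have hVS : V < S := by
    constructor
    · intro v hv; exact hPV v hv
    · intro h
      exact hxV (h hPx)
  have hStop : S = ⊤ := hV.2 S hVS
  have hyS : P y := by
    have : y ∈ S := hStop ▸ Subring.mem_top y
    exact this
  obtain ⟨n, hrep⟩ := hyS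
  obtain ⟨v, hv, hy⟩ := hpad y n (n + 1) (Nat.le_succ n) hrep
  -- x^i * y^i = 1
  have hxyi : ∀ i : ℕ, x ^ i * y ^ i = 1 := by
    intro i
    induction i with
    | zero => simp
    | succ i ih =>
      rw [pow_succ x, pow_succ' y, mul_assoc, ← mul_assoc x, hxy, one_mul, ih]
  have hxiyn : ∀ i ≤ n, x ^ i * y ^ n = y ^ (n - i) := by
    intro i hi
    have : y ^ n = y ^ i * y ^ (n - i) := by
      rw [← pow_add, Nat.add_sub_cancel' hi]
    rw [this, ← mul_assoc, hxyi, one_mul]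
  -- monic relation
  have hrel : y ^ (n + 1) + ∑ j ∈ Finset.range (n + 1), (-(v (n - j))) * y ^ j = 0 := by
    have h1 : y ^ (n + 1) = ∑ i ∈ Finset.range (n + 1), v i * y ^ (n - i) := by
      calc y ^ (n + 1) = y * y ^ n := pow_succ' y n
        _ = (∑ i ∈ Finset.range (n + 1), v i * x ^ i) * y ^ n := by rw [← hy]
        _ = ∑ i ∈ Finset.range (n + 1), v i * (x ^ i * y ^ n) := by
            rw [Finset.sum_mul]; exact Finset.sum_congr rfl (fun i _ => mul_assoc _ _ _)
        _ = ∑ i ∈ Finset.range (n + 1), v i * y ^ (n - i) :=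
            Finset.sum_congr rfl (fun i hi => by
              rw [hxiyn i (Nat.lt_succ_iff.mp (Finset.mem_range.mp hi))])
    have h2 : ∑ j ∈ Finset.range (n + 1), v (n - j) * y ^ j
        = ∑ i ∈ Finset.range (n + 1), v i * y ^ (n - i) := by
      rw [← Finset.sum_range_reflect]
      refine Finset.sum_congr rfl fun i hi => ?_
      have hin : i ≤ n := Nat.lt_succ_iff.mp (Finset.mem_range.mp hi)
      have h3 : n + 1 - 1 - i = n - i := by omega
      have h4 : n - (n - i) = i := by omega
      rw [h3, h4]
    simp only [neg_mul, Finset.sum_neg_distrib, h2, ← h1, add_neg_cancel]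
  exact hic y (n + 1) (Nat.succ_le_succ (Nat.zero_le n)) _
    (fun j => V.neg_mem (hv _)) hrel
end

section
/- Let D be a division ring and V a proper discrete valuation ring for D: there is a nonzero nonunit π ∈ V such that every element of D can be written as uπⁿ with u ∈ U(V) and n ∈ ℤ. Then V is a maximal subring of D. -/
/-- Let `D` be a division ring and `V` a proper discrete valuation subring of
`D`: there is a nonzero nonunit `π ∈ V` such that every nonzero `x ∈ D` can be
written as `x = uπⁿ = πⁿv` with `u, v ∈ U(V)`, `n ∈ ℤ`.  Then `V` is a maximal
subring of `D`. -/
theorem stmt_9 {D : Type*} [DivisionRing D] (V : Subring D) (π : D)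
    (hπV : π ∈ V) (hπ0 : π ≠ 0) (hπnu : π⁻¹ ∉ V)
    (hdvr : ∀ x : D, x ≠ 0 → ∃ (u v : D) (n : ℤ),
      u ∈ V ∧ u⁻¹ ∈ V ∧ v ∈ V ∧ v⁻¹ ∈ V ∧ x = u * π ^ n ∧ x = π ^ n * v) :
    IsCoatom V := by
  constructor
  · intro h
    exact hπnu (h.symm ▸ Subring.mem_top π⁻¹)
  · intro W hW
    obtain ⟨x, hxW, hxV⟩ := SetLike.exists_of_lt hW
    have hx0 : x ≠ 0 := by rintro rfl; exact hxV V.zero_mem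
    obtain ⟨u, v, n, hu, hui, hv, hvi, hx1, hx2⟩ := hdvr x hx0
    have hu0 : u ≠ 0 := by rintro rfl; simp at hx1; exact hx0 hx1
    have hpn : π ^ n ∈ W := by
      have h1 : (π : D) ^ n = u⁻¹ * x := by
        rw [hx1, ← mul_assoc, inv_mul_cancel₀ hu0, one_mul]
      rw [h1]; exact W.mul_mem (hW.le hui) hxW
    have hneg : n < 0 := by
      by_contra h
      push_neg at h
      lift n to ℕ using h
      apply hxV
      rw [hx1, zpow_natCast]
      exact V.mul_mem hu (V.pow_mem hπV n)
    have hπinvW : π⁻¹ ∈ W := by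
      have h2 : π ^ (-n - 1) ∈ V := by
        obtain ⟨m, hm⟩ : ∃ m : ℕ, -n - 1 = (m : ℤ) := ⟨(-n - 1).toNat, by omega⟩
        rw [hm, zpow_natCast]; exact V.pow_mem hπV m
      have heq : π ^ n * π ^ (-n - 1) = π⁻¹ := by
        rw [← zpow_add₀ hπ0, show n + (-n - 1) = -1 by ring, zpow_neg_one]
      exact heq ▸ W.mul_mem hpn (hW.le h2)
    ext y
    simp only [Subring.mem_top, iff_true]
    by_cases hy0 : y = 0
    · exact hy0 ▸ W.zero_mem
    obtain ⟨u', v', m, hu', _, _, _, hy1, _⟩ := hdvr y hy0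
    have hpm : π ^ m ∈ W := by
      rcases m with k | k
      · exact zpow_natCast π k ▸ W.pow_mem (hW.le hπV) k
      · rw [zpow_negSucc, ← inv_pow]; exact W.pow_mem hπinvW (k + 1)
    rw [hy1]
    exact W.mul_mem (hW.le hu') hpm
end

section
/- Let R be a maximal subring of a ring T, and suppose every left primitive ideal of T is a maximal two-sided ideal of T. If R does not contain any left primitive ideal of T, then J(R) = R ∩ J(T), provided also J(T) ∩ R ⊆ J(R) holds (e.g., when R is left Artinian). -/
/-- An ideal `P` of `T` is left primitive if it is the annihilator of a simple
left `T`-module. -/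
def IsLeftPrimitive {T : Type u} [Ring T] (P : Ideal T) : Prop :=
  ∃ (M : Type u) (_ : AddCommGroup M) (_ : Module T M),
    IsSimpleModule T M ∧ P = Module.annihilator T M

/-- Let `R` be a maximal subring of `T`, suppose every left primitive ideal of
`T` is a maximal two-sided ideal, `R` contains no left primitive ideal of `T`,
and `J(T) ∩ R ⊆ J(R)`.  Then `J(R) = R ∩ J(T)`. -/
theorem stmt_11 {T : Type u} [Ring T] (R : Subring T) (hR : IsCoatom R)
    (hprim : ∀ P : Ideal T, IsLeftPrimitive P →
      (∀ a ∈ P, ∀ r : T, a * r ∈ P) ∧ P ≠ ⊤ ∧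
        ∀ Q : Ideal T, (∀ a ∈ Q, ∀ r : T, a * r ∈ Q) → P < Q → Q = ⊤)
    (hnc : ∀ P : Ideal T, IsLeftPrimitive P → ¬ ((P : Set T) ⊆ (R : Set T)))
    (hsub : ∀ x : ↥R, (x : T) ∈ Ideal.jacobson (⊥ : Ideal T) →
      x ∈ Ideal.jacobson (⊥ : Ideal ↥R)) :
    ∀ x : ↥R, x ∈ Ideal.jacobson (⊥ : Ideal ↥R) ↔
      (x : T) ∈ Ideal.jacobson (⊥ : Ideal T) := by
  intro x
  refine ⟨fun hx => ?_, hsub x⟩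
  rw [Ideal.jacobson, Submodule.mem_sInf]
  rintro m ⟨-, hm⟩
  haveI hsimp : IsSimpleModule T (T ⧸ m) :=
    isSimpleModule_iff_isCoatom.mpr (Ideal.isMaximal_def.mp hm)
  set P := Module.annihilator T (T ⧸ m) with hPdef
  have hP : IsLeftPrimitive P := ⟨T ⧸ m, inferInstance, inferInstance, hsimp, rfl⟩
  have hann : ∀ a ∈ P, ∀ y : T ⧸ m, a • y = 0 := fun a ha y =>
    Module.mem_annihilator.mp ha y
  obtain ⟨hPr, -, -⟩ := hprim P hP
  -- the subring R + P is all of T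
  have hdecomp : ∀ t : T, ∃ r ∈ R, ∃ p ∈ P, r + p = t := by
    let S : Subring T :=
      { carrier := {t | ∃ r ∈ R, ∃ p ∈ P, r + p = t}
        one_mem' := ⟨1, R.one_mem, 0, P.zero_mem, by abel⟩
        zero_mem' := ⟨0, R.zero_mem, 0, P.zero_mem, by abel⟩
        add_mem' := by
          rintro a b ⟨r, hr, p, hp, rfl⟩ ⟨r', hr', p', hp', rfl⟩
          exact ⟨r + r', R.add_mem hr hr', p + p', P.add_mem hp hp', by abel⟩
        neg_mem' := by
          rintro a ⟨r, hr, p, hp, rfl⟩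
          exact ⟨-r, R.neg_mem hr, -p, P.neg_mem hp, by abel⟩
        mul_mem' := by
          rintro a b ⟨r, hr, p, hp, rfl⟩ ⟨r', hr', p', hp', rfl⟩
          refine ⟨r * r', R.mul_mem hr hr', r * p' + (p * r' + p * p'),
            P.add_mem (Ideal.mul_mem_left _ _ hp')
              (P.add_mem (hPr p hp r') (hPr p hp p')), by
                rw [add_mul, mul_add, mul_add]; abel⟩ }
    have hRS : R ≤ S := fun r hr => ⟨r, hr, 0, P.zero_mem, by abel⟩
    have hne : R ≠ S := by
      obtain ⟨p, hp, hpR⟩ := Set.not_subset.mp (hnc P hP)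
      intro h
      exact hpR (h ▸ (⟨0, R.zero_mem, p, hp, by abel⟩ : p ∈ S))
    have hStop : S = ⊤ := hR.2 S (lt_of_le_of_ne hRS hne)
    intro t
    have ht : t ∈ S := hStop ▸ Subring.mem_top t
    exact ht
  -- T ⧸ m is a simple R-module
  haveI : Nontrivial (T ⧸ m) := IsSimpleModule.nontrivial T _
  haveI hsimpR : IsSimpleModule ↥R (T ⧸ m) := by
    refine (isSimpleModule_iff ..).mpr ⟨fun N => ?_⟩
    let N' : Submodule T (T ⧸ m) :=
      { carrier := (N : Set (T ⧸ m))
        zero_mem' := N.zero_mem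
        add_mem' := fun ha hb => N.add_mem ha hb
        smul_mem' := by
          intro t n hn
          obtain ⟨r, hr, p, hp, rfl⟩ := hdecomp t
          rw [add_smul]
          rw [hann p hp n]
          have : r • n = (⟨r, hr⟩ : ↥R) • n := rfl
          rw [add_zero, this]
          exact N.smul_mem _ hn }
    rcases hsimp.1.2 N' with h | h
    · left
      ext y
      have : y ∈ N ↔ y ∈ N' := Iff.rfl
      rw [Submodule.mem_bot, this, h, Submodule.mem_bot]
    · right
      ext y
      have : y ∈ N ↔ y ∈ N' := Iff.rfl
      simp only [Submodule.mem_top, iff_true]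
      rw [this, h]
      trivial
  -- J(R) kills the simple R-module, in particular the class of 1
  have hone : (Submodule.Quotient.mk (1 : T) : T ⧸ m) ≠ 0 := by
    rw [Ne, Submodule.Quotient.mk_eq_zero]
    exact fun h => hm.ne_top ((Ideal.eq_top_iff_one m).mpr h)
  have hxk : x ∈ LinearMap.ker
      (LinearMap.toSpanSingleton ↥R (T ⧸ m) (Submodule.Quotient.mk (1 : T))) :=
    Submodule.mem_sInf.mp hx _
      ⟨bot_le, IsSimpleModule.ker_toSpanSingleton_isMaximal ↥R hone⟩
  have hx0 : (x : T) • (Submodule.Quotient.mk (1 : T) : T ⧸ m) = 0 := hxk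
  rw [← Submodule.Quotient.mk_smul, smul_eq_mul, mul_one,
    Submodule.Quotient.mk_eq_zero] at hx0
  exact hx0
end

section
/- Let T be a domain which is integral over its center C, and suppose J(C) = J(T) ∩ C. If J(C) = 0, then J(T) = 0. -/
open Polynomial

/-- Let `T` be a domain integral over its center `C` with
`J(C) = J(T) ∩ C`.  If `J(C) = 0` then `J(T) = 0`. -/
theorem stmt_14 {T : Type*} [Ring T] [IsDomain T]
    (hint : ∀ t : T, ∃ p : Polynomial (Subring.center T),
      p.Monic ∧ p.eval₂ (Subring.center T).subtype t = 0)
    (hJC : ∀ c : Subring.center T,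
      c ∈ Ideal.jacobson (⊥ : Ideal (Subring.center T)) ↔
        (c : T) ∈ Ideal.jacobson (⊥ : Ideal T))
    (hJ0 : Ideal.jacobson (⊥ : Ideal (Subring.center T)) = ⊥) :
    Ideal.jacobson (⊥ : Ideal T) = ⊥ := by
  rw [eq_bot_iff]
  intro x hx
  simp only [Ideal.mem_bot]
  by_contra hx0
  -- the set of degrees of monic annihilating polynomials of x
  have hS : ∃ n : ℕ, ∃ p : Polynomial (Subring.center T),
      p.Monic ∧ p.eval₂ (Subring.center T).subtype x = 0 ∧ p.natDegree = n := by
    obtain ⟨p, hp, he⟩ := hint x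
    exact ⟨p.natDegree, p, hp, he, rfl⟩
  classical
  set n := Nat.find hS with hn
  obtain ⟨p, hmon, heval, hdeg⟩ := Nat.find_spec hS
  rw [← hn] at hdeg
  have hn1 : 1 ≤ n := by
    rcases Nat.eq_zero_or_pos n with h0 | h1
    · exfalso
      rw [h0] at hdeg
      rw [hmon.natDegree_eq_zero.mp hdeg] at heval
      simp at heval
    · exact h1
  -- decompose p = divX p * X + C (p.coeff 0)
  have hdec : p.divX * X + C (p.coeff 0) = p := p.divX_mul_X_add
  have heval2 : (p.divX).eval₂ (Subring.center T).subtype x * x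
      + ((p.coeff 0 : Subring.center T) : T) = 0 := by
    have := congrArg (fun q => q.eval₂ (Subring.center T).subtype x) hdec
    simpa [eval₂_add, eval₂_mul_X, eval₂_C] using this.trans heval
  -- so the constant coefficient lies in J(T)
  have hc : ((p.coeff 0 : Subring.center T) : T) ∈ Ideal.jacobson (⊥ : Ideal T) := by
    have : ((p.coeff 0 : Subring.center T) : T)
        = -((p.divX).eval₂ (Subring.center T).subtype x) * x := by
      rw [neg_mul]
      exact eq_neg_of_add_eq_zero_left (by rw [add_comm]; exact heval2)
    rw [this]
    exact Ideal.mul_mem_left _ _ hx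
  have hc0 : p.coeff 0 = 0 := by
    have := (hJC (p.coeff 0)).mpr hc
    rwa [hJ0, Ideal.mem_bot] at this
  -- hence divX p annihilates x
  have hdivXeval : (p.divX).eval₂ (Subring.center T).subtype x = 0 := by
    rw [hc0] at heval2
    simp only [ZeroMemClass.coe_zero, add_zero] at heval2
    rcases mul_eq_zero.mp heval2 with h | h
    · exact h
    · exact absurd h hx0
  -- divX p is monic of smaller degree: contradiction with minimality
  have hdivdeg : (p.divX).natDegree = n - 1 := by
    rw [natDegree_divX_eq_natDegree_tsub_one, hdeg]
  have hdivmon : (p.divX).Monic := by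
    unfold Polynomial.Monic leadingCoeff
    rw [hdivdeg, coeff_divX, Nat.sub_add_cancel hn1, ← hdeg]
    exact hmon
  have hlt : n - 1 < n := Nat.sub_lt hn1 one_pos
  exact absurd ⟨p.divX, hdivmon, hdivXeval, hdivdeg⟩ (Nat.find_min hS hlt)
end

section
/- Let T be a ring with J(T) = 0 which is torsion-free over its center C (i.e., cx = 0 with c ∈ C, c ≠ 0, x ∈ T implies x = 0). If C is integrally closed in T, then C is algebraically closed in T: every x ∈ T that satisfies a nonzero polynomial with coefficients in C lies in C. -/
open Polynomial

private lemma intNorm_eval₂ {T : Type*} [Ring T] (p : Polynomial (Subring.center T))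
    (h : 1 ≤ p.natDegree) (x : T) :
    (p.integralNormalization).eval₂ (Subring.center T).subtype
        ((Subring.center T).subtype p.leadingCoeff * x) =
      (Subring.center T).subtype p.leadingCoeff ^ (p.natDegree - 1) *
        p.eval₂ (Subring.center T).subtype x := by
  set f := (Subring.center T).subtype
  rw [eval₂_eq_sum_range, eval₂_eq_sum_range, Finset.mul_sum]
  apply Finset.sum_congr
  · rw [natDegree_eq_of_degree_eq p.degree_integralNormalization]
  intro i _
  have hcom : Commute (f p.leadingCoeff) x :=
    (Subring.mem_center_iff.mp p.leadingCoeff.2 x).symm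
  rw [hcom.mul_pow, ← mul_assoc, ← map_pow, ← map_mul,
    integralNormalization_coeff_mul_leadingCoeff_pow _ h, map_mul, map_pow, ← mul_assoc]
  have h2 : f p.leadingCoeff ^ (p.natDegree - 1) * f (p.coeff i) =
      f (p.coeff i) * f p.leadingCoeff ^ (p.natDegree - 1) :=
    Subring.mem_center_iff.mp (p.coeff i).2 _
  rw [h2, mul_assoc]

/-- Let `T` be a ring with `J(T) = 0` which is torsion-free over its center
`C`.  If `C` is integrally closed in `T` then `C` is algebraically closed in
`T`. -/
theorem stmt_15 {T : Type*} [Ring T]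
    (hJ : Ideal.jacobson (⊥ : Ideal T) = ⊥)
    (htf : ∀ c : Subring.center T, (c : T) ≠ 0 → ∀ x : T, (c : T) * x = 0 → x = 0)
    (hicl : ∀ x : T, (∃ p : Polynomial (Subring.center T),
      p.Monic ∧ p.eval₂ (Subring.center T).subtype x = 0) → x ∈ Subring.center T) :
    ∀ x : T, (∃ p : Polynomial (Subring.center T),
      p ≠ 0 ∧ p.eval₂ (Subring.center T).subtype x = 0) → x ∈ Subring.center T := by
  intro x ⟨p, hp, hpx⟩
  set C := Subring.center T
  have hc : p.leadingCoeff ≠ 0 := leadingCoeff_ne_zero.mpr hp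
  have hcT : (p.leadingCoeff : T) ≠ 0 := fun h => hc (Subtype.ext h)
  have hz : (p.integralNormalization).eval₂ C.subtype (C.subtype p.leadingCoeff * x) = 0 := by
    obtain h | h := p.natDegree.eq_zero_or_pos
    · exfalso
      rw [eq_C_of_natDegree_eq_zero h, eval₂_C] at hpx
      rw [← leadingCoeff_ne_zero, leadingCoeff, h] at hp
      exact hp (Subtype.ext hpx)
    · rw [intNorm_eval₂ p h x, hpx, mul_zero]
  have hmem : (p.leadingCoeff : T) * x ∈ C :=
    hicl _ ⟨p.integralNormalization, monic_integralNormalization hp, hz⟩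
  rw [Subring.mem_center_iff] at hmem ⊢
  intro y
  have hcen : ∀ z : T, (p.leadingCoeff : T) * z = z * (p.leadingCoeff : T) :=
    fun z => (Subring.mem_center_iff.mp p.leadingCoeff.2 z).symm
  have key : (p.leadingCoeff : T) * (y * x - x * y) = 0 := by
    have h1 := hmem y
    calc (p.leadingCoeff : T) * (y * x - x * y)
        = y * ((p.leadingCoeff : T) * x) - (p.leadingCoeff : T) * x * y := by
          rw [mul_sub, ← mul_assoc, hcen y, mul_assoc, mul_assoc]
      _ = 0 := by rw [h1, sub_self]
  have := htf p.leadingCoeff hcT _ key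
  linear_combination (norm := noncomm_ring) this
end
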